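/- arXiv:1703.07089 — 5 statements merged into one kernel-verified Lean document; each statement's English description precedes it below -/
import Mathlib

section
/- Let N, X, N_U be positive integers with N = X·N_U, X even, X ≥ 2, N_U even. Fix ε ∈ [-1/2, 1/2] and m ∈ {0,...,N_U/2-1}, and define Υ_m(υ) = sin⁻²(π(υ + mX + ε)/N) + sin⁻²(π(υ - X - mX + ε)/N) for integer υ ∈ {1,...,X-1}. Then Υ_m attains its minimum over integers υ ∈ {1,...,X-1} at υ = X/2. -/
/-!
With `f x = 1 / sin x ^ 2`, `a υ = π (υ + mX + ε) / N` and `b υ = π (mX + X - υ - ε) / N` we have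
`Υ υ = f (a υ) + f (b υ)`, since `sin (-x) ^ 2 = sin x ^ 2`. The sum `a υ + b υ` does not depend
on `υ`, both angles lie in `(0, π)` where `f` is convex (a convex decreasing function of the concave
`sin`), and `|a υ - b υ| = (2π / N) |υ - X/2 + ε|`. For a convex function, `f x + f y` with `x + y`
fixed grows with `|x - y|`, and since `|ε| ≤ 1/2` the distance `|υ - X/2 + ε|` is smallest at
`υ = X/2`.
-/

open Real Set

theorem ConvexOn.apply_add_apply_le_of_abs_sub_le {s : Set ℝ} {f : ℝ → ℝ} (hf : ConvexOn ℝ s f)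
    {x₁ y₁ x₂ y₂ : ℝ} (hsum : x₁ + y₁ = x₂ + y₂) (hdist : |x₁ - y₁| ≤ |x₂ - y₂|)
    (hx₂ : x₂ ∈ s) (hy₂ : y₂ ∈ s) : f x₁ + f y₁ ≤ f x₂ + f y₂ := by
  rcases eq_or_ne x₂ y₂ with rfl | hne
  · obtain rfl : x₁ = y₁ := sub_eq_zero.mp (abs_nonpos_iff.mp (by simpa using hdist))
    obtain rfl : x₁ = x₂ := by linarith
    rfl
  -- `x₁` and `y₁` are the convex combinations of `x₂, y₂` with weights `(1 ± r) / 2`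
  set r := (x₁ - y₁) / (x₂ - y₂)
  have hsub : x₂ - y₂ ≠ 0 := sub_ne_zero.mpr hne
  have hr : |r| ≤ 1 := by
    rw [abs_div]; exact div_le_one_of_le₀ hdist (abs_nonneg _)
  obtain ⟨hr₁, hr₂⟩ := abs_le.mp hr
  have hx₁ : x₁ = ((1 + r) / 2) • x₂ + ((1 - r) / 2) • y₂ := by
    simp only [smul_eq_mul, r]; field_simp; linear_combination (x₂ - y₂) * hsum
  have hy₁ : y₁ = ((1 - r) / 2) • x₂ + ((1 + r) / 2) • y₂ := by
    simp only [smul_eq_mul, r]; field_simp; linear_combination (x₂ - y₂) * hsum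
  have h₁ := hf.2 hx₂ hy₂ (by linarith : 0 ≤ (1 + r) / 2) (by linarith : 0 ≤ (1 - r) / 2) (by ring)
  have h₂ := hf.2 hx₂ hy₂ (by linarith : 0 ≤ (1 - r) / 2) (by linarith : 0 ≤ (1 + r) / 2) (by ring)
  rw [← hx₁, smul_eq_mul, smul_eq_mul] at h₁
  rw [← hy₁, smul_eq_mul, smul_eq_mul] at h₂
  linarith

theorem convexOn_one_div_sq : ConvexOn ℝ (Ioi 0) fun y : ℝ => 1 / y ^ 2 :=
  (convexOn_zpow (-2)).congr fun y _ => by simp [zpow_neg, one_div]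

theorem antitoneOn_one_div_sq : AntitoneOn (fun y : ℝ => 1 / y ^ 2) (Ioi 0) :=
  fun _ hx _ _ hxy => one_div_le_one_div_of_le (pow_pos hx 2) (pow_le_pow_left₀ (le_of_lt hx) hxy 2)

theorem convexOn_one_div_sin_sq : ConvexOn ℝ (Ioo 0 π) fun x => 1 / sin x ^ 2 := by
  have himage : sin '' Ioo 0 π ⊆ Ioi 0 := by
    rintro _ ⟨x, hx, rfl⟩
    exact sin_pos_of_pos_of_lt_pi hx.1 hx.2
  have hconvex : Convex ℝ (sin '' Ioo 0 π) :=
    (isPreconnected_Ioo.image sin continuous_sin.continuousOn).convex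
  exact (convexOn_one_div_sq.subset himage hconvex).comp_concaveOn
    (strictConcaveOn_sin_Icc.concaveOn.subset Ioo_subset_Icc_self (convex_Ioo 0 π))
    (antitoneOn_one_div_sq.mono himage)

theorem abs_le_abs_intCast_add {ε : ℝ} (hε : |ε| ≤ 1 / 2) (n : ℤ) : |ε| ≤ |n + ε| := by
  rcases eq_or_ne n 0 with rfl | hn
  · simp
  have hn₁ : (1 : ℝ) ≤ |(n : ℝ)| := by exact_mod_cast Int.one_le_abs hn
  calc |ε| ≤ |(n : ℝ)| - |ε| := by linarith
    _ ≤ |n + ε| := by simpa using abs_sub_abs_le_abs_add (n : ℝ) ε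

theorem pi_mul_div_mem_Ioo {a n : ℝ} (ha : 0 < a) (han : a < n) : π * a / n ∈ Ioo 0 π := by
  have hn : 0 < n := ha.trans han
  refine ⟨by positivity, ?_⟩
  rw [div_lt_iff₀ hn]
  exact mul_lt_mul_of_pos_left han pi_pos

theorem upsilon_min_at_half_X_general
    (N X N_U : ℕ) (hNeq : N = X * N_U) (hXeven : Even X)
    (hNUpos : 0 < N_U)
    (ε : ℝ) (hε : |ε| ≤ 1/2)
    (m : ℕ) (hm : m ≤ N_U / 2 - 1)
    (Υ : ℕ → ℝ)
    (hΥ : Υ = fun (υ : ℕ) => 1 / (sin (π * ((υ : ℝ) + (m : ℝ) * X + ε) / N))^2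
        + 1 / (sin (π * ((υ : ℝ) - X - (m : ℝ) * X + ε) / N))^2) :
    ∀ υ : ℕ, 1 ≤ υ → υ ≤ X - 1 → Υ (X / 2) ≤ Υ υ := by
  intro υ hυ₁ hυ₂
  set a : ℝ → ℝ := fun t => π * (t + m * X + ε) / N
  set b : ℝ → ℝ := fun t => π * (m * X + X - t - ε) / N
  have hΥab (t : ℕ) : Υ t = 1 / sin (a t) ^ 2 + 1 / sin (b t) ^ 2 := by
    simp only [hΥ]
    rw [← neg_sq (sin (b t)), ← sin_neg]
    congr 4
    simp only [b]
    ring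
  have hhalf : ((X / 2 : ℕ) : ℝ) = X / 2 := by
    rw [Nat.cast_div_charZero hXeven.two_dvd]; norm_num
  have hmX : ((m : ℝ) + 1) * X ≤ N := by
    have hm₁ : m + 1 ≤ N_U := by omega
    have : (m + 1) * X ≤ N := hNeq ▸ mul_comm N_U X ▸ Nat.mul_le_mul_right X hm₁
    exact_mod_cast this
  have hυ₁' : (1 : ℝ) ≤ υ := by exact_mod_cast hυ₁
  have hυ₂' : (υ : ℝ) + 1 ≤ X := by exact_mod_cast (by omega : υ + 1 ≤ X)
  obtain ⟨hε₁, hε₂⟩ := abs_le.mp hε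
  have hmX₀ : (0 : ℝ) ≤ m * X := by positivity
  have hsub (t : ℝ) : a t - b t = 2 * π / N * (t - X / 2 + ε) := by ring
  rw [hΥab, hΥab]
  refine convexOn_one_div_sin_sq.apply_add_apply_le_of_abs_sub_le (by ring) ?_
    (pi_mul_div_mem_Ioo (by linarith) (by linarith))
    (pi_mul_div_mem_Ioo (by linarith) (by linarith))
  rw [hsub, hsub, abs_mul, abs_mul, hhalf, sub_self, zero_add]
  refine mul_le_mul_of_nonneg_left ?_ (abs_nonneg _)
  have hcast : (((υ : ℤ) - (X / 2 : ℕ) : ℤ) : ℝ) = υ - X / 2 := by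
    rw [Int.cast_sub, Int.cast_natCast, Int.cast_natCast, hhalf]
  simpa only [hcast] using abs_le_abs_intCast_add hε ((υ : ℤ) - (X / 2 : ℕ))

theorem upsilon_min_at_half_X
    (N X N_U : ℕ) (hNeq : N = X * N_U) (hXeven : Even X) (hX2 : 2 ≤ X)
    (hNUpos : 0 < N_U) (hNUeven : Even N_U)
    (ε : ℝ) (hε : |ε| ≤ 1/2)
    (m : ℕ) (hm : m ≤ N_U / 2 - 1)
    (Υ : ℕ → ℝ)
    (hΥ : Υ = fun (υ : ℕ) => 1 / (sin (π * ((υ : ℝ) + (m : ℝ) * X + ε) / N))^2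
        + 1 / (sin (π * ((υ : ℝ) - X - (m : ℝ) * X + ε) / N))^2) :
    ∀ υ : ℕ, 1 ≤ υ → υ ≤ X - 1 → Υ (X / 2) ≤ Υ υ :=
  upsilon_min_at_half_X_general N X N_U hNeq hXeven hNUpos ε hε m hm Υ hΥ
end

section
/- A sequence s of length N has constant amplitude and zero autocorrelation (CAZAC) if and only if its discrete Fourier transform also has constant amplitude and zero autocorrelation. -/
open Complex

/-- Periodic autocorrelation of a sequence on `ZMod N`. -/
noncomputable def autocorr {N : ℕ} [NeZero N] (s : ZMod N → ℂ) (τ : ZMod N) : ℂ :=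
  ∑ n : ZMod N, s n * (starRingEnd ℂ) (s (n - τ))

/-- Constant (nonzero) amplitude and zero autocorrelation at all nonzero lags. -/
def IsCAZAC {N : ℕ} [NeZero N] (s : ZMod N → ℂ) : Prop :=
  (∃ c : ℝ, 0 < c ∧ ∀ n : ZMod N, ‖s n‖ = c) ∧
  (∀ τ : ZMod N, τ ≠ 0 → autocorr s τ = 0)

/-- Discrete Fourier transform of a sequence on `ZMod N`. -/
noncomputable def dft {N : ℕ} [NeZero N] (s : ZMod N → ℂ) : ZMod N → ℂ :=
  fun k => ∑ n : ZMod N, s n * Complex.exp (-2 * Real.pi * I * (n.val : ℂ) * (k.val : ℂ) / N)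

/-!
By Wiener–Khinchin, the DFT of the autocorrelation of `s` is `|ŝ|²`. A function on `ZMod N`
vanishes off `0` iff its DFT is constant, so `s` has zero autocorrelation at nonzero lags iff `|ŝ|`
is constant. Applied to `ŝ`, whose DFT is `N • s (-·)`, the same argument shows that `ŝ` has zero
autocorrelation at nonzero lags iff `|s|` is constant. Both sides of the equivalence therefore say
that `|s|` and `|ŝ|` are constant and `s ≠ 0`.
-/

open Finset
open scoped ComplexConjugate ZMod

namespace ZMod

variable {N : ℕ} [NeZero N]

lemma stdAddChar_neg (a : ZMod N) : stdAddChar (-a) = conj (stdAddChar a) := by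
  rw [stdAddChar_apply, stdAddChar_apply, AddChar.map_neg_eq_inv, Circle.coe_inv_eq_conj]

variable {E : Type*} [AddCommGroup E] [Module ℂ E]

lemma dft_single_zero (a : E) : 𝓕 (Pi.single (0 : ZMod N) a) = fun _ ↦ a := by
  ext k
  simp [dft_apply, Pi.single_apply]

lemma exists_dft_eq_const_iff (Φ : ZMod N → E) :
    (∃ a, ∀ k, 𝓕 Φ k = a) ↔ ∀ j ≠ 0, Φ j = 0 := by
  constructor
  · rintro ⟨a, ha⟩ j hj
    have hΦ : Φ = Pi.single 0 a := dft.injective <| by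
      rw [dft_single_zero]
      exact funext ha
    simp [hΦ, hj]
  · intro h
    have hΦ : Φ = Pi.single 0 (Φ 0) := by
      ext j
      by_cases hj : j = 0
      · simp [hj]
      · simp [hj, h j hj]
    exact ⟨Φ 0, fun k ↦ by rw [hΦ, dft_single_zero, Pi.single_eq_same]⟩

end ZMod

section ConstantNorm

variable {ι E : Type*} [NormedAddCommGroup E]

lemma exists_forall_norm_sq_eq_iff (f : ι → E) :
    (∃ a : ℂ, ∀ i, (‖f i‖ ^ 2 : ℂ) = a) ↔ ∃ c : ℝ, ∀ i, ‖f i‖ = c := by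
  constructor
  · rintro ⟨a, ha⟩
    refine ⟨√a.re, fun i ↦ ?_⟩
    rw [← ha i]
    norm_cast
    rw [Real.sqrt_sq (norm_nonneg _)]
  · rintro ⟨c, hc⟩
    exact ⟨c ^ 2, fun i ↦ by rw [hc]⟩

lemma exists_pos_forall_norm_eq_iff [Nonempty ι] (f : ι → E) :
    (∃ c, 0 < c ∧ ∀ i, ‖f i‖ = c) ↔ (∃ c, ∀ i, ‖f i‖ = c) ∧ f ≠ 0 := by
  constructor
  · rintro ⟨c, hc, hf⟩
    refine ⟨⟨c, hf⟩, fun h0 ↦ ?_⟩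
    have := hf (Classical.arbitrary ι)
    simp only [h0, Pi.zero_apply, norm_zero] at this
    exact hc.ne this
  · rintro ⟨⟨c, hf⟩, hne⟩
    obtain ⟨i, hi⟩ := Function.ne_iff.mp hne
    exact ⟨c, hf i ▸ norm_pos_iff.mpr hi, hf⟩

end ConstantNorm

section Autocorrelation

variable {N : ℕ} [NeZero N]

lemma dft_eq_zmod_dft (s : ZMod N → ℂ) : dft s = 𝓕 s := by
  ext k
  refine sum_congr rfl fun n _ ↦ ?_
  have : (-(n * k) : ZMod N) = ((-(n.val * k.val) : ℤ) : ZMod N) := by simp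
  rw [smul_eq_mul, mul_comm, this, ZMod.stdAddChar_coe]
  push_cast
  ring_nf

lemma dft_autocorr (s : ZMod N → ℂ) (k : ZMod N) :
    𝓕 (autocorr s) k = ‖𝓕 s k‖ ^ 2 := by
  rw [← mul_conj', ZMod.dft_apply, ZMod.dft_apply, map_sum, sum_mul_sum]
  simp only [autocorr, smul_sum]
  rw [sum_comm]
  refine sum_congr rfl fun n _ ↦ Fintype.sum_equiv (Equiv.subLeft n) _ _ fun τ ↦ ?_
  simp only [Equiv.subLeft_apply, smul_eq_mul, map_mul, ← ZMod.stdAddChar_neg, neg_neg]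
  rw [show -(τ * k) = -(n * k) + (n - τ) * k by ring, AddChar.map_add_eq_mul]
  ring

lemma forall_autocorr_eq_zero_iff (s : ZMod N → ℂ) :
    (∀ τ ≠ 0, autocorr s τ = 0) ↔ ∃ c : ℝ, ∀ k, ‖𝓕 s k‖ = c := by
  rw [← ZMod.exists_dft_eq_const_iff]
  simp only [dft_autocorr]
  exact exists_forall_norm_sq_eq_iff _

lemma forall_autocorr_dft_eq_zero_iff (s : ZMod N → ℂ) :
    (∀ τ ≠ 0, autocorr (𝓕 s) τ = 0) ↔ ∃ c : ℝ, ∀ n, ‖s n‖ = c := by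
  have hN : (0 : ℝ) < N := by simp [Nat.pos_of_neZero]
  simp only [forall_autocorr_eq_zero_iff, ZMod.dft_dft, norm_smul, norm_natCast]
  constructor
  · rintro ⟨c, hc⟩
    exact ⟨c / N, fun n ↦ by rw [eq_div_iff hN.ne', mul_comm, ← hc (-n), neg_neg]⟩
  · rintro ⟨c, hc⟩
    exact ⟨N * c, fun k ↦ by rw [hc]⟩

end Autocorrelation

theorem cazac_iff_dft_cazac (N : ℕ) [NeZero N] (s : ZMod N → ℂ) :
    IsCAZAC s ↔ IsCAZAC (dft s) := by
  rw [dft_eq_zmod_dft, IsCAZAC, IsCAZAC, exists_pos_forall_norm_eq_iff,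
    exists_pos_forall_norm_eq_iff, forall_autocorr_dft_eq_zero_iff, forall_autocorr_eq_zero_iff,
    LinearEquiv.map_ne_zero_iff]
  tauto
end

section
/- For any even positive integer N_U, the Chu sequence s(n) = exp(iπ n²/N_U), n ∈ ℤ/N_U, has constant amplitude 1 and zero periodic autocorrelation: Σ_{n=0}^{N_U-1} s(n)·conj(s(n-τ)) = 0 for every τ ≢ 0 mod N_U. -/
/-!
Write `φ(u) = exp(π i u² / N)` for `u ∈ ℤ`. Since `(u + N)² = u² + 2uN + N²` and `N` is even,
`φ` is `N`-periodic, so `s(n) = φ(n)` for any integer lift `n`. Then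
`φ(n) · conj φ(n - τ) = conj φ(τ) · exp(2π i nτ / N)`, and summing the nontrivial additive
character `n ↦ exp(2π i nτ / N)` of `ℤ/N` over `n` gives zero.
-/

open Complex ComplexConjugate

noncomputable def chuPhase (N : ℕ) (u : ℤ) : ℂ := exp (Real.pi * I * (u : ℂ) ^ 2 / N)

lemma norm_chuPhase (N : ℕ) (u : ℤ) : ‖chuPhase N u‖ = 1 := by
  rw [chuPhase, show (Real.pi * I * (u : ℂ) ^ 2 / N) = ((Real.pi * u ^ 2 / N : ℝ) : ℂ) * I by
    push_cast; ring]
  exact norm_exp_ofReal_mul_I _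

lemma chuPhase_periodic {N : ℕ} (hN : Even N) : Function.Periodic (chuPhase N) N := by
  obtain rfl | hN0 := eq_or_ne N 0
  · simp
  obtain ⟨m, rfl⟩ := hN
  intro u
  have hexpand : Real.pi * I * ((u + (m + m : ℕ) : ℤ) : ℂ) ^ 2 / (m + m : ℕ)
      = Real.pi * I * (u : ℂ) ^ 2 / (m + m : ℕ) + (u + m : ℤ) * (2 * Real.pi * I) := by
    field_simp
    push_cast
    ring
  rw [chuPhase, chuPhase, hexpand, exp_add, exp_int_mul_two_pi_mul_I, mul_one]

lemma chuPhase_val_intCast {N : ℕ} [NeZero N] (hN : Even N) (u : ℤ) :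
    chuPhase N ((u : ZMod N).val) = chuPhase N u := by
  rw [ZMod.val_intCast, Int.emod_def, mul_comm]
  exact (chuPhase_periodic hN).sub_int_mul_eq _

lemma chuPhase_mul_conj_chuPhase_sub {N : ℕ} [NeZero N] (a t : ℤ) :
    chuPhase N a * conj (chuPhase N (a - t)) =
      conj (chuPhase N t) * ZMod.stdAddChar ((a * t : ℤ) : ZMod N) := by
  rw [← inv_eq_conj (norm_chuPhase N _), ← inv_eq_conj (norm_chuPhase N _),
    ZMod.stdAddChar_coe, chuPhase, chuPhase, chuPhase, ← exp_neg, ← exp_neg, ← exp_add,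
    ← exp_add]
  congr 1
  push_cast
  ring

theorem sum_chuPhase_mul_conj_chuPhase_sub {N : ℕ} [NeZero N] (hN : Even N) {τ : ZMod N}
    (hτ : τ ≠ 0) :
    ∑ n : ZMod N, chuPhase N n.val * conj (chuPhase N (n - τ).val) = 0 := by
  have hterm (n : ZMod N) : chuPhase N n.val * conj (chuPhase N (n - τ).val) =
      conj (chuPhase N τ.val) * ZMod.stdAddChar (n * τ) := by
    have hsub : (((n.val : ℤ) - τ.val : ℤ) : ZMod N) = n - τ := by simp
    rw [← hsub, chuPhase_val_intCast hN, chuPhase_mul_conj_chuPhase_sub]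
    simp
  rw [Finset.sum_congr rfl fun n _ ↦ hterm n, ← Finset.mul_sum,
    AddChar.sum_mulShift τ (ZMod.isPrimitive_stdAddChar N), if_neg hτ, Nat.cast_zero, mul_zero]

theorem chu_sequence_cazac_general
    (N_U : ℕ) (heven : Even N_U) [NeZero N_U]
    (s : ZMod N_U → ℂ)
    (hs : ∀ n : ZMod N_U, s n = Complex.exp (Real.pi * I * ((n.val : ℂ))^2 / N_U)) :
    (∀ n : ZMod N_U, ‖s n‖ = 1) ∧
    (∀ τ : ZMod N_U, τ ≠ 0 →
      ∑ n : ZMod N_U, s n * (starRingEnd ℂ) (s (n - τ)) = 0) := by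
  have hs' (n : ZMod N_U) : s n = chuPhase N_U n.val := by simp [hs, chuPhase]
  simp only [hs']
  exact ⟨fun n ↦ norm_chuPhase N_U _, fun τ hτ ↦ sum_chuPhase_mul_conj_chuPhase_sub heven hτ⟩

theorem chu_sequence_cazac
    (N_U : ℕ) (hpos : 0 < N_U) (heven : Even N_U) [NeZero N_U]
    (s : ZMod N_U → ℂ)
    (hs : ∀ n : ZMod N_U, s n = Complex.exp (Real.pi * I * ((n.val : ℂ))^2 / N_U)) :
    (∀ n : ZMod N_U, ‖s n‖ = 1) ∧
    (∀ τ : ZMod N_U, τ ≠ 0 →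
      ∑ n : ZMod N_U, s n * (starRingEnd ℂ) (s (n - τ)) = 0) :=
  chu_sequence_cazac_general N_U heven s hs
end

section
/- For a frequency-domain training sequence that is nonzero exactly on a pilot index set C ⊆ ℤ/N, a circular frequency shift by an integer ℓ (induced by an integer CFO) maps the support to C + ℓ (mod N). If the pilot spacings of a subset D ⊆ C satisfy the distinct circular differences condition — ((d_{σ(n+1)} - d_n)) mod N are pairwise distinct over n — then the shift ℓ is uniquely determined by the shifted support: if (D + ℓ₁) mod N = (D + ℓ₂) mod N with D having all pairwise circular gaps between consecutive elements distinct and |D| ≥ 2, |D| < N, then ℓ₁ ≡ ℓ₂ (mod N). -/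
/-!
Translation preserves differences, hence cyclic successors. If `D + ℓ = D`, translating by `ℓ`
therefore carries the gap after `d 0` to the gap after `d 0 + ℓ = d m`, so `g 0 = g m`;
distinct gaps force `m = 0`, hence `ℓ = 0`.
-/

theorem Finset.image_add_right_sub_eq_self {G : Type*} [AddGroup G] [DecidableEq G]
    {s : Finset G} {a b : G} (h : s.image (· + a) = s.image (· + b)) :
    s.image (· + (a - b)) = s := by
  have := congrArg (Finset.image (· - b)) h
  simpa only [Finset.image_image, Function.comp_def, add_sub_assoc, sub_self, add_zero,
    Finset.image_id'] using this

namespace ZMod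

variable {N : ℕ}

theorem val_sub_eq_ite [NeZero N] (a b : ZMod N) :
    (a - b).val = if b.val ≤ a.val then a.val - b.val else N + a.val - b.val := by
  split_ifs with h
  · exact val_sub h
  · have hb : b ≠ 0 := by rintro rfl; simp at h
    have := b.val_lt
    rw [sub_eq_add_neg, val_add_of_lt] <;> rw [neg_val, if_neg hb] <;> omega

/-- `y` is the first point of `S` strictly after `x` in the cyclic order of `ZMod N`. -/
def IsCyclicSucc (S : Set (ZMod N)) (x y : ZMod N) : Prop :=
  y ∈ S ∧ y ≠ x ∧ ∀ z ∈ S, z ≠ x → (y - x).val ≤ (z - x).val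

theorem IsCyclicSucc.unique [NeZero N] {S : Set (ZMod N)} {x y y' : ZMod N}
    (h : IsCyclicSucc S x y) (h' : IsCyclicSucc S x y') : y = y' := by
  have := (h.2.2 y' h'.1 h'.2.1).antisymm (h'.2.2 y h.1 h.2.1)
  simpa using val_injective N this

theorem IsCyclicSucc.image_add_right {S : Set (ZMod N)} {x y : ZMod N}
    (h : IsCyclicSucc S x y) (ℓ : ZMod N) :
    IsCyclicSucc ((· + ℓ) '' S) (x + ℓ) (y + ℓ) := by
  refine ⟨Set.mem_image_of_mem _ h.1, by simpa using h.2.1, ?_⟩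
  rintro _ ⟨z, hz, rfl⟩ hzx
  simpa using h.2.2 z hz (by simpa using hzx)

theorem isCyclicSucc_range_add_one {K : ℕ} [NeZero N] [NeZero K] (hK : 2 ≤ K)
    {d : Fin K → ZMod N} (hd : StrictMono fun n => (d n).val) (n : Fin K) :
    IsCyclicSucc (Set.range d) (d n) (d (n + 1)) := by
  have hone : ((1 : Fin K) : ℕ) = 1 := by rw [Fin.val_one', Nat.mod_eq_of_lt hK]
  have hne : n + 1 ≠ n :=
    add_ne_left.mpr (Fin.ne_of_val_ne (by rw [hone, Fin.val_zero]; exact one_ne_zero))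
  refine ⟨⟨n + 1, rfl⟩, fun h => hne (hd.injective (congrArg val h)), ?_⟩
  rintro _ ⟨m, rfl⟩ hmn
  replace hmn : m ≠ n := fun h => hmn (congrArg d h)
  have := (d (n + 1)).val_lt
  have := (d m).val_lt
  have hsucc : ((n + 1 : Fin K) : ℕ) = (n + 1) % K := by rw [Fin.val_add, hone]
  rw [val_sub_eq_ite, val_sub_eq_ite]
  rcases Nat.lt_or_ge (n + 1) K with h | h
  · rw [Nat.mod_eq_of_lt h] at hsucc
    have : (d n).val < (d (n + 1)).val := hd (by rw [Fin.lt_def, hsucc]; omega)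
    rcases hmn.lt_or_gt with hmn | hmn
    · have : (d m).val < (d n).val := hd hmn
      split_ifs <;> omega
    · have : (d (n + 1)).val ≤ (d m).val :=
        hd.monotone (show n + 1 ≤ m by rw [Fin.le_def, hsucc]; omega)
      split_ifs <;> omega
  · have hlast : n + 1 = 0 := by
      rw [Fin.ext_iff, hsucc, show (n : ℕ) + 1 = K by omega, Nat.mod_self, Fin.val_zero]
    rw [hlast]
    have : (d m).val < (d n).val :=
      hd (show m < n by rw [Fin.lt_def]; have := Fin.val_ne_of_ne hmn; omega)
    have : (d 0).val ≤ (d m).val := hd.monotone (Fin.zero_le m)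
    split_ifs <;> omega

end ZMod

theorem distinct_gaps_shift_injective_general
    (N : ℕ) [NeZero N]
    (D : Finset (ZMod N)) (hcard2 : 2 ≤ D.card)
    (K : ℕ) [NeZero K] (hK : K = D.card)
    (d : Fin K → ZMod N)
    (hrange : ∀ x : ZMod N, x ∈ D ↔ ∃ n : Fin K, d n = x)
    (hmono : ∀ n n' : Fin K, n < n' → (d n).val < (d n').val)
    (g : Fin K → ZMod N)
    (hg : ∀ n : Fin K, g n = d (n + 1) - d n)
    (hgaps : Function.Injective g)
    (ℓ₁ ℓ₂ : ZMod N)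
    (hshift : D.image (fun x => x + ℓ₁) = D.image (fun x => x + ℓ₂)) :
    ℓ₁ = ℓ₂ := by
  set ℓ := ℓ₁ - ℓ₂
  have hD : (D : Set (ZMod N)) = Set.range d := Set.ext hrange
  have hinv : (· + ℓ) '' Set.range d = Set.range d := by
    rw [← hD, ← Finset.coe_image, Finset.image_add_right_sub_eq_self hshift]
  have hsucc := ZMod.isCyclicSucc_range_add_one (hK ▸ hcard2) (d := d) fun n n' => hmono n n'
  obtain ⟨m, hm⟩ : d 0 + ℓ ∈ Set.range d :=
    hinv ▸ Set.mem_image_of_mem _ (Set.mem_range_self 0)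
  have hm1 : d (m + 1) = d (0 + 1) + ℓ :=
    (hsucc m).unique (hm ▸ hinv ▸ (hsucc 0).image_add_right ℓ)
  have hgm : g m = g 0 := by rw [hg, hg, hm1, hm]; abel
  rw [hgaps hgm, left_eq_add, sub_eq_zero] at hm
  exact hm

theorem distinct_gaps_shift_injective
    (N : ℕ) [NeZero N]
    (D : Finset (ZMod N)) (hcard2 : 2 ≤ D.card) (hcardN : D.card < N)
    (K : ℕ) [NeZero K] (hK : K = D.card)
    (d : Fin K → ZMod N)
    (hrange : ∀ x : ZMod N, x ∈ D ↔ ∃ n : Fin K, d n = x)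
    (hmono : ∀ n n' : Fin K, n < n' → (d n).val < (d n').val)
    (g : Fin K → ZMod N)
    (hg : ∀ n : Fin K, g n = d (n + 1) - d n)
    (hgaps : Function.Injective g)
    (ℓ₁ ℓ₂ : ZMod N)
    (hshift : D.image (fun x => x + ℓ₁) = D.image (fun x => x + ℓ₂)) :
    ℓ₁ = ℓ₂ :=
  distinct_gaps_shift_injective_general N D hcard2 K hK d hrange hmono g hg hgaps ℓ₁ ℓ₂ hshift
end

section
/- Let s : ℤ/N_U → ℂ be a CAZAC sequence with |s(n)| = 1, and consider its periodic extension to length N = X·N_U. Received correlations at lag mN_U recover the CFO phase exactly in the noiseless case: for r(n) = e^{2πi nε_F/N}·Σ_{l=0}^{L-1} s(n-l) h_l with L ≤ N_U, the correlation R_m = Σ_{n=mN_U}^{N-1} r(n)·conj(r(n - mN_U))/(N - mN_U) satisfies R_m = e^{2πi m N_U ε_F / N} · σ², where σ² = (1/(N - mN_U))·Σ_{n=mN_U}^{N-1} Σ_{l=0}^{L-1} |s(n-l)|²|h_l|² = Σ_l |h_l|² (using zero autocorrelation of s and |s|=1), for each m ∈ {0,...,X/2}. -/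
open Complex

open ComplexConjugate

/-!
Since `ε_F` only rotates the phase of `r` linearly in time, `r n * conj (r (n - m N_U))` is the
constant phase `e^{2πi m N_U ε_F / N}` times `|y n|²`, where `y = s ⊛ h` is the noiseless channel
output, which has period `N_U`. The window `[m N_U, N)` consists of `X - m` full periods, and over
one period the cross terms `h_l conj h_l'` (`l ≠ l'`) are weighted by the periodic autocorrelation
of `s` at the nonzero lag `l' - l`, so they vanish, leaving `N_U · Σ_l |h_l|²`.
-/

namespace ZMod

theorem sum_Ico_natCast_eq_sum {n : ℕ} [NeZero n] {M : Type*} [AddCommMonoid M]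
    (f : ZMod n → M) (b : ℕ) :
    ∑ k ∈ Finset.Ico b (b + n), f k = ∑ x, f x := by
  refine Finset.sum_nbij' (fun k => (k : ZMod n)) (fun x => b + (x - b).val)
    (fun _ _ => Finset.mem_univ _) ?_ ?_ ?_ (fun _ _ => rfl)
  · exact fun x _ => Finset.mem_Ico.mpr
      ⟨Nat.le_add_right _ _, Nat.add_lt_add_left (ZMod.val_lt _) b⟩
  · intro k hk
    obtain ⟨hbk, hkn⟩ := Finset.mem_Ico.mp hk
    rw [← Nat.cast_sub hbk, ZMod.val_cast_of_lt (by omega)]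
    omega
  · intro x _
    simp

theorem sum_Ico_natCast_eq_nsmul_sum {n : ℕ} [NeZero n] {M : Type*} [AddCommMonoid M]
    (f : ZMod n → M) (b c : ℕ) :
    ∑ k ∈ Finset.Ico b (b + c * n), f k = c • ∑ x, f x := by
  induction c with
  | zero => simp
  | succ c ih =>
    rw [← Finset.sum_Ico_consecutive _ (Nat.le_add_right b (c * n)) (by nlinarith), ih,
      show b + (c + 1) * n = b + c * n + n by ring, sum_Ico_natCast_eq_sum, succ_nsmul]

end ZMod

section PerfectAutocorrelation

variable {G : Type*} [AddCommGroup G] [Fintype G] {s : G → ℂ}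

theorem sum_shift_mul_conj_shift_eq_ite [DecidableEq G] (hamp : ∀ g, ‖s g‖ = 1)
    (hzac : ∀ τ, τ ≠ 0 → ∑ g, s g * conj (s (g - τ)) = 0) (a b : G) :
    ∑ g, s (g - a) * conj (s (g - b)) = if a = b then (Fintype.card G : ℂ) else 0 := by
  have hshift : ∑ g, s (g - a) * conj (s (g - b)) = ∑ g, s g * conj (s (g - (b - a))) :=
    Fintype.sum_equiv (Equiv.subRight a) _ _ fun g => by simp only [Equiv.subRight_apply,
      sub_sub, add_sub_cancel]
  split_ifs with hab
  · subst hab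
    have hunit : ∀ g, s g * conj (s g) = 1 := fun g => by
      rw [mul_conj, normSq_eq_norm_sq, hamp, one_pow, ofReal_one]
    simp [hunit]
  · rw [hshift, hzac _ (sub_ne_zero.mpr (Ne.symm hab))]

theorem sum_conv_mul_conj_conv_eq_card_mul {ι : Type*} [Fintype ι] (hamp : ∀ g, ‖s g‖ = 1)
    (hzac : ∀ τ, τ ≠ 0 → ∑ g, s g * conj (s (g - τ)) = 0) {d : ι → G}
    (hd : Function.Injective d) (h : ι → ℂ) :
    ∑ g, (∑ i, s (g - d i) * h i) * conj (∑ i, s (g - d i) * h i)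
      = Fintype.card G * ∑ i, (‖h i‖ ^ 2 : ℂ) := by
  classical
  calc ∑ g, (∑ i, s (g - d i) * h i) * conj (∑ i, s (g - d i) * h i)
      = ∑ g, ∑ i, ∑ j, h i * conj (h j) * (s (g - d i) * conj (s (g - d j))) := by
        refine Finset.sum_congr rfl fun g _ => ?_
        rw [map_sum, Finset.sum_mul_sum]
        exact Finset.sum_congr rfl fun i _ => Finset.sum_congr rfl fun j _ => by
          rw [map_mul]; ring
    _ = ∑ i, ∑ j, h i * conj (h j) * ∑ g, s (g - d i) * conj (s (g - d j)) := by
        simp only [Finset.mul_sum]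
        rw [Finset.sum_comm]
        exact Finset.sum_congr rfl fun i _ => Finset.sum_comm
    _ = ∑ i, h i * conj (h i) * Fintype.card G := by
        simp only [sum_shift_mul_conj_shift_eq_ite hamp hzac, hd.eq_iff, mul_ite, mul_zero,
          Finset.sum_ite_eq, Finset.mem_univ, if_true]
    _ = Fintype.card G * ∑ i, (‖h i‖ ^ 2 : ℂ) := by
        simp only [mul_conj, normSq_eq_norm_sq, ofReal_pow, Finset.mul_sum]
        exact Finset.sum_congr rfl fun i _ => mul_comm _ _

end PerfectAutocorrelation

theorem correlation_recovers_cfo_phase_general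
    (X N_U N : ℕ) (hX : 0 < X) [NeZero N_U] (hN : N = X * N_U)
    (s : ZMod N_U → ℂ)
    (hamp : ∀ n : ZMod N_U, ‖s n‖ = 1)
    (hzac : ∀ τ : ZMod N_U, τ ≠ 0 → ∑ n : ZMod N_U, s n * (starRingEnd ℂ) (s (n - τ)) = 0)
    (L : ℕ) (hL : L ≤ N_U) (h : Fin L → ℂ)
    (εF : ℝ)
    (r : ℕ → ℂ)
    (hr : ∀ n : ℕ, r n = Complex.exp (2 * Real.pi * I * n * εF / N)
        * ∑ l : Fin L, s ((n : ZMod N_U) - (l : ℕ)) * h l)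
    (m : ℕ) (hm : m ≤ X / 2) :
    (1 / ((N : ℂ) - m * N_U)) * ∑ n ∈ Finset.Ico (m * N_U) N, r n * (starRingEnd ℂ) (r (n - m * N_U))
      = Complex.exp (2 * Real.pi * I * m * N_U * εF / N)
        * ((∑ l : Fin L, ‖h l‖^2 : ℝ) : ℂ) := by
  have hmX : m < X := hm.trans_lt (Nat.div_lt_self hX one_lt_two)
  set y : ZMod N_U → ℂ := fun k => ∑ l : Fin L, s (k - (l : ℕ)) * h l
  have hlag : ∀ n ∈ Finset.Ico (m * N_U) N, r n * conj (r (n - m * N_U))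
      = exp (2 * Real.pi * I * m * N_U * εF / N) * (y n * conj (y n)) := by
    intro n hn
    have hle : m * N_U ≤ n := (Finset.mem_Ico.mp hn).1
    have hy : ((n - m * N_U : ℕ) : ZMod N_U) = n := by simp [Nat.cast_sub hle]
    rw [hr, hr, hy, map_mul, ← exp_conj, mul_mul_mul_comm, ← exp_add]
    congr 2
    simp only [Nat.cast_sub hle, Nat.cast_mul, map_div₀, map_mul, map_ofNat, conj_ofReal, conj_I,
      map_sub, map_natCast]
    ring
  have hinj : Function.Injective fun l : Fin L => ((l : ℕ) : ZMod N_U) := fun l l' hll =>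
    Fin.ext <| by
      simpa [ZMod.natCast_eq_natCast_iff', Nat.mod_eq_of_lt (l.2.trans_le hL),
        Nat.mod_eq_of_lt (l'.2.trans_le hL)] using hll
  have hwindow : ∑ n ∈ Finset.Ico (m * N_U) N, y n * conj (y n)
      = (X - m) • ∑ k, y k * conj (y k) := by
    rw [hN, show X * N_U = m * N_U + (X - m) * N_U by rw [← add_mul, Nat.add_sub_cancel' hmX.le]]
    exact ZMod.sum_Ico_natCast_eq_nsmul_sum (fun k => y k * conj (y k)) _ _
  have hden : (N : ℂ) - m * N_U = ((X - m : ℕ) : ℂ) * N_U := by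
    rw [hN, Nat.cast_sub hmX.le]
    push_cast
    ring
  have hXm : ((X - m : ℕ) : ℂ) ≠ 0 := Nat.cast_ne_zero.mpr (Nat.sub_ne_zero_of_lt hmX)
  have hNU : (N_U : ℂ) ≠ 0 := NeZero.ne _
  rw [Finset.sum_congr rfl hlag, ← Finset.mul_sum, hwindow, hden,
    sum_conv_mul_conj_conv_eq_card_mul hamp hzac hinj, ZMod.card, nsmul_eq_mul]
  push_cast
  field_simp

theorem correlation_recovers_cfo_phase
    (X N_U N : ℕ) (hX : 0 < X) (hNU : 0 < N_U) [NeZero N_U] (hN : N = X * N_U)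
    (s : ZMod N_U → ℂ)
    (hamp : ∀ n : ZMod N_U, ‖s n‖ = 1)
    (hzac : ∀ τ : ZMod N_U, τ ≠ 0 → ∑ n : ZMod N_U, s n * (starRingEnd ℂ) (s (n - τ)) = 0)
    (L : ℕ) (hL : L ≤ N_U) (h : Fin L → ℂ)
    (εF : ℝ)
    (r : ℕ → ℂ)
    (hr : ∀ n : ℕ, r n = Complex.exp (2 * Real.pi * I * n * εF / N)
        * ∑ l : Fin L, s ((n : ZMod N_U) - (l : ℕ)) * h l)
    (m : ℕ) (hm : m ≤ X / 2) :
    (1 / ((N : ℂ) - m * N_U)) * ∑ n ∈ Finset.Ico (m * N_U) N, r n * (starRingEnd ℂ) (r (n - m * N_U))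
      = Complex.exp (2 * Real.pi * I * m * N_U * εF / N)
        * ((∑ l : Fin L, ‖h l‖^2 : ℝ) : ℂ) :=
  correlation_recovers_cfo_phase_general X N_U N hX hN s hamp hzac L hL h εF r hr m hm
end
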